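/- Over Z/2, for every odd integer a ≥ 3, the 3-cochain ε_{⟨a̲,a+2⟩} := Σ_{r=0}^{(a−1)/2} δ₁(e_{a−2r}) ∧ e_{a+2r+2} is a cocycle: δ₁(ε_{⟨a̲,a+2⟩}) = 0. -/
import Mathlib


noncomputable section

/-- Ground field `Z/2`. -/
abbrev K2 := ZMod 2

/-- The free `Z/2`-module on basis `(e_i)_{i ≥ 1}`. -/
abbrev V1 := {i : ℕ // 1 ≤ i} →₀ K2

/-- The exterior algebra over `Z/2` on the space with basis `(e_i)_{i ≥ 1}`. -/
abbrev Lam1 := ExteriorAlgebra K2 V1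

/-- The generator `e_i` (defined to be `0` for the irrelevant case `i = 0`). -/
noncomputable def E (i : ℕ) : Lam1 :=
  if h : 1 ≤ i then ExteriorAlgebra.ι K2 (Finsupp.single (⟨i, h⟩ : {i : ℕ // 1 ≤ i}) 1)
  else 0

/-- The coboundary of a generator:
`δ₁(e_i) = Σ_{a+b=i, 1 ≤ a < b} (a+b) e_a ∧ e_b`, coefficients mod 2. -/
noncomputable def δE (i : ℕ) : Lam1 :=
  ∑ a ∈ Finset.Ico 1 i, if a < i - a then (i : K2) • (E a * E (i - a)) else 0

/-- `δ₁(δ₁(e_x))`, computed by applying the Leibniz rule to each wedge term of `δ₁(e_x)`. -/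
noncomputable def δδE (x : ℕ) : Lam1 :=
  ∑ a ∈ Finset.Ico 1 x,
    if a < x - a then (x : K2) • (δE a * E (x - a) + E a * δE (x - a)) else 0

lemma lam_add_self (y : Lam1) : y + y = 0 := by
  rw [← two_smul K2 y, show (2 : K2) = 0 from by decide, zero_smul]

lemma eq_of_add_eq_zero_lam {p q : Lam1} (h : p + q = 0) : p = q :=
  calc p = p + (p + q) := by rw [h, add_zero]
    _ = (p + p) + q := (add_assoc p p q).symm
    _ = q := by rw [lam_add_self, zero_add]

lemma E_mul_self (i : ℕ) : E i * E i = 0 := by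
  unfold E
  split_ifs with h
  · exact ExteriorAlgebra.ι_sq_zero _
  · simp

lemma E_comm (i j : ℕ) : E i * E j = E j * E i := by
  apply eq_of_add_eq_zero_lam
  unfold E
  split_ifs with h1 h2 h2
  · have h := ExteriorAlgebra.ι_sq_zero (R := K2)
      ((Finsupp.single (⟨i, h1⟩ : {i : ℕ // 1 ≤ i}) 1
        + Finsupp.single (⟨j, h2⟩ : {i : ℕ // 1 ≤ i}) 1 : V1))
    rw [map_add, add_mul, mul_add, mul_add, ExteriorAlgebra.ι_sq_zero,
      ExteriorAlgebra.ι_sq_zero, zero_add, add_zero] at h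
    exact h
  · simp
  · simp
  · simp

lemma E_zero : E 0 = 0 := by unfold E; simp

-- cast lemmas
lemma K2_odd {x : ℕ} (h : Odd x) : (x : K2) = 1 := by
  obtain ⟨k, rfl⟩ := h
  push_cast
  rw [show ((2 : K2)) = 0 from by decide]
  ring

lemma K2_even {x : ℕ} (h : Even x) : (x : K2) = 0 := by
  obtain ⟨k, rfl⟩ := h
  push_cast
  rw [← two_mul, show ((2 : K2)) = 0 from by decide]
  ring

-- triple product lemmas
lemma tri_swap12 (i j k : ℕ) : E i * E j * E k = E j * E i * E k := by
  rw [E_comm i j]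

lemma tri_swap23 (i j k : ℕ) : E i * E j * E k = E i * E k * E j := by
  rw [mul_assoc, E_comm j k, ← mul_assoc]

lemma tri_rot (i j k : ℕ) : E i * (E j * E k) = E j * E k * E i := by
  rw [← mul_assoc, tri_swap12, mul_assoc, E_comm i k, ← mul_assoc]

lemma tri_last_sq (i j : ℕ) : E i * E j * E j = 0 := by
  rw [mul_assoc, E_mul_self, mul_zero]

-- quadruple product lemmas (shape a * b * (c * d))
lemma quad_swap_right (w : Lam1) (k l : ℕ) : w * E k * E l = w * E l * E k := by
  rw [mul_assoc, E_comm, ← mul_assoc]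

lemma quad_swap24 (i j k l : ℕ) : E i * E j * (E k * E l) = E i * E l * (E k * E j) := by
  simp only [← mul_assoc]
  rw [quad_swap_right (E i * E j) k l, tri_swap23 i j l, quad_swap_right (E i * E l) j k]

lemma quad_swap13 (i j k l : ℕ) : E i * E j * (E k * E l) = E k * E j * (E i * E l) := by
  simp only [← mul_assoc]
  rw [tri_swap12 i j k, tri_swap23 j i k, tri_swap12 j k i]

lemma quad_24_eq_zero (i j k : ℕ) : E i * E j * (E k * E j) = 0 := by
  simp only [← mul_assoc]
  rw [tri_swap23 i j k, mul_assoc (E i * E k), E_mul_self, mul_zero]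

lemma quad_13_eq_zero (i j l : ℕ) : E i * E j * (E i * E l) = 0 := by
  simp only [← mul_assoc]
  rw [tri_swap23 i j i, E_mul_self, zero_mul, zero_mul]

open Finset

lemma not_odd_of_even {n : ℕ} (h : Even n) : ¬ Odd n := by
  rw [Nat.not_odd_iff_even]; exact h

/-- Raw extension of `δE` to a larger index range, with parity condition absorbed. -/
lemma δE_extend_raw (c N : ℕ) (h : c ≤ N) :
    δE c = ∑ u ∈ Ico 1 N, if Odd c ∧ u < c - u then E u * E (c - u) else 0 := by
  rw [δE]
  rw [Finset.sum_subset (Finset.Ico_subset_Ico_right h) (by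
    intro u hu hnotin
    simp only [Finset.mem_Ico] at hu hnotin
    rw [if_neg (by omega)])]
  apply Finset.sum_congr rfl
  intro u hu
  rcases Nat.even_or_odd c with hc | hc
  · rw [K2_even hc]
    split_ifs with h1 h2 h2
    · exact absurd h2.1 (not_odd_of_even hc)
    · simp
    · exact absurd h2.2 h1
    · rfl
  · rw [K2_odd hc]
    by_cases hlt : u < c - u
    · rw [if_pos hlt, if_pos ⟨hc, hlt⟩, one_smul]
    · rw [if_neg hlt, if_neg (by tauto)]

/-- For odd `m`, `δE m` indexed by the odd element of each pair. -/
lemma δE_oddIdx (m N : ℕ) (h : m ≤ N) (hm : Odd m) :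
    δE m = ∑ u ∈ Ico 1 N, if Odd u ∧ u < m then E u * E (m - u) else 0 := by
  obtain ⟨k, hk⟩ := hm
  rw [δE_extend_raw m N h, ← Finset.sum_filter, ← Finset.sum_filter]
  apply Finset.sum_nbij' (fun u => if Odd u then u else m - u)
      (fun v => if v < m - v then v else m - v)
  · -- hi
    intro u hu
    simp only [Finset.mem_filter, Finset.mem_Ico] at hu ⊢
    obtain ⟨⟨hu1, hu2⟩, _, hult⟩ := hu
    rcases Nat.even_or_odd u with hue | huo
    · obtain ⟨t, ht⟩ := id hue
      rw [if_neg (not_odd_of_even hue)]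
      exact ⟨⟨by omega, by omega⟩, ⟨k - t, by omega⟩, by omega⟩
    · rw [if_pos huo]
      exact ⟨⟨hu1, hu2⟩, huo, by omega⟩
  · -- hj
    intro v hv
    simp only [Finset.mem_filter, Finset.mem_Ico] at hv ⊢
    obtain ⟨⟨hv1, hv2⟩, hvo, hvm⟩ := hv
    obtain ⟨t, ht⟩ := id hvo
    split_ifs with hlt
    · exact ⟨⟨hv1, hv2⟩, ⟨k, hk⟩, hlt⟩
    · exact ⟨⟨by omega, by omega⟩, ⟨k, hk⟩, by omega⟩
  · -- left_inv
    intro u hu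
    simp only [Finset.mem_filter, Finset.mem_Ico] at hu
    obtain ⟨⟨hu1, hu2⟩, _, hult⟩ := hu
    rcases Nat.even_or_odd u with hue | huo
    · obtain ⟨t, ht⟩ := id hue
      rw [if_neg (not_odd_of_even hue), if_neg (by omega)]
      omega
    · rw [if_pos huo, if_pos hult]
  · -- right_inv
    intro v hv
    simp only [Finset.mem_filter, Finset.mem_Ico] at hv
    obtain ⟨⟨hv1, hv2⟩, hvo, hvm⟩ := hv
    obtain ⟨t, ht⟩ := id hvo
    by_cases hlt : v < m - v
    · rw [if_pos hlt, if_pos hvo]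
    · rw [if_neg hlt, if_neg (by
        intro ⟨s, hs⟩
        omega)]
      omega
  · -- values
    intro u hu
    simp only [Finset.mem_filter, Finset.mem_Ico] at hu
    obtain ⟨⟨hu1, hu2⟩, _, hult⟩ := hu
    rcases Nat.even_or_odd u with hue | huo
    · rw [if_neg (not_odd_of_even hue)]
      rw [show m - (m - u) = u by omega, E_comm]
    · rw [if_pos huo]

/-- The involution argument: the normalized 3-form sum vanishes. -/
lemma inv2 (x : ℕ) (hx : Odd x) :
    ∑ p ∈ (Ico 1 x ×ˢ Ico 1 x).filter
      (fun p => Odd p.1 ∧ Even p.2 ∧ p.1 + p.2 < x),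
      E p.1 * E p.2 * E (x - p.1 - p.2) = 0 := by
  refine Finset.sum_involution (fun p _ => (p.1, x - p.1 - p.2)) ?_ ?_ ?_ ?_
  · intro p hp
    simp only [Finset.mem_filter, Finset.mem_product, Finset.mem_Ico] at hp
    obtain ⟨⟨⟨hp11, hp12⟩, hp21, hp22⟩, ho, he, hlt⟩ := hp
    have h1 : x - p.1 - (x - p.1 - p.2) = p.2 := by omega
    show E p.1 * E p.2 * E (x - p.1 - p.2)
      + E p.1 * E (x - p.1 - p.2) * E (x - p.1 - (x - p.1 - p.2)) = 0
    rw [h1, tri_swap23 p.1 p.2 (x - p.1 - p.2)]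
    exact lam_add_self _
  · intro p hp hf heq
    apply hf
    have h2 : x - p.1 - p.2 = p.2 := congrArg Prod.snd heq
    show E p.1 * E p.2 * E (x - p.1 - p.2) = 0
    rw [h2]
    exact tri_last_sq _ _
  · intro p hp
    simp only [Finset.mem_filter, Finset.mem_product, Finset.mem_Ico] at hp ⊢
    obtain ⟨⟨⟨hp11, hp12⟩, hp21, hp22⟩, ho, he, hlt⟩ := hp
    have hxo := Nat.odd_iff.mp hx
    have hoo := Nat.odd_iff.mp ho
    have hee := Nat.even_iff.mp he
    refine ⟨⟨⟨hp11, hp12⟩, by omega, by omega⟩, ho, ?_, by omega⟩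
    rw [Nat.even_iff]; omega
  · intro p hp
    simp only [Finset.mem_filter, Finset.mem_product, Finset.mem_Ico] at hp
    obtain ⟨⟨⟨hp11, hp12⟩, hp21, hp22⟩, ho, he, hlt⟩ := hp
    show (p.1, x - p.1 - (x - p.1 - p.2)) = p
    have h1 : x - p.1 - (x - p.1 - p.2) = p.2 := by omega
    rw [h1]

lemma pair_eq {α β : Type} {u : α} {v : β} {r : α × β} (h1 : u = r.1) (h2 : v = r.2) : (u, v) = r := by
  rw [h1, h2]

lemma convA (x : ℕ) :
    (∑ c ∈ Ico 1 x, if c < x - c then δE c * E (x - c) else 0)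
      = ∑ p ∈ (Ico 1 x ×ˢ Ico 1 x).filter
          (fun p => (Odd p.1 ∧ Even p.2 ∧ p.1 + p.2 < x) ∧ p.1 + p.2 < x - p.1 - p.2),
          E p.1 * E p.2 * E (x - p.1 - p.2) := by
  have step1 : (∑ c ∈ Ico 1 x, if c < x - c then δE c * E (x - c) else 0)
      = ∑ q ∈ (Ico 1 x ×ˢ Ico 1 x).filter
          (fun q => Odd q.1 ∧ q.1 < x - q.1 ∧ q.2 < q.1 - q.2),
          E q.2 * E (q.1 - q.2) * E (x - q.1) := by
    rw [Finset.sum_filter, Finset.sum_product]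
    apply Finset.sum_congr rfl
    intro c hc
    simp only [Finset.mem_Ico] at hc
    by_cases hlt : c < x - c
    · rw [if_pos hlt, δE_extend_raw c x (by omega), Finset.sum_mul]
      apply Finset.sum_congr rfl
      intro u hu
      rw [ite_mul, zero_mul]
      by_cases h1 : Odd c ∧ u < c - u
      · rw [if_pos h1, if_pos (show Odd c ∧ c < x - c ∧ u < c - u from ⟨h1.1, hlt, h1.2⟩)]
      · rw [if_neg h1, if_neg (by tauto)]
    · rw [if_neg hlt]
      refine (Finset.sum_eq_zero ?_).symm
      intro u hu
      rw [if_neg (by tauto)]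
  rw [step1]
  apply Finset.sum_nbij' (fun q => if Odd q.2 then (q.2, q.1 - q.2) else (q.1 - q.2, q.2))
    (fun p => (p.1 + p.2, min p.1 p.2))
  · -- hi
    intro q hq
    simp only [Finset.mem_filter, Finset.mem_product, Finset.mem_Ico] at hq
    obtain ⟨⟨⟨h11, h12⟩, h21, h22⟩, hoc, hcx, hucu⟩ := hq
    have hc2 := Nat.odd_iff.mp hoc
    rcases Nat.even_or_odd q.2 with hue | huo
    · have hu2 := Nat.even_iff.mp hue
      rw [if_neg (not_odd_of_even hue)]
      simp only [Finset.mem_filter, Finset.mem_product, Finset.mem_Ico]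
      refine ⟨⟨⟨?_, ?_⟩, ?_, ?_⟩, ⟨?_, ?_, ?_⟩, ?_⟩ <;>
        first | (rw [Nat.odd_iff]; omega) | (rw [Nat.even_iff]; omega) | omega
    · have hu2 := Nat.odd_iff.mp huo
      rw [if_pos huo]
      simp only [Finset.mem_filter, Finset.mem_product, Finset.mem_Ico]
      refine ⟨⟨⟨?_, ?_⟩, ?_, ?_⟩, ⟨?_, ?_, ?_⟩, ?_⟩ <;>
        first | (rw [Nat.odd_iff]; omega) | (rw [Nat.even_iff]; omega) | omega
  · -- hj
    intro p hp
    simp only [Finset.mem_filter, Finset.mem_product, Finset.mem_Ico] at hp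
    obtain ⟨⟨⟨h11, h12⟩, h21, h22⟩, ⟨ho, he, hsum⟩, hlt⟩ := hp
    have ho2 := Nat.odd_iff.mp ho
    have he2 := Nat.even_iff.mp he
    simp only [Finset.mem_filter, Finset.mem_product, Finset.mem_Ico]
    refine ⟨⟨⟨?_, ?_⟩, ?_, ?_⟩, ?_, ?_, ?_⟩ <;>
      first | (rw [Nat.odd_iff]; omega) | (rw [Nat.even_iff]; omega) | omega
  · -- left_inv
    intro q hq
    simp only [Finset.mem_filter, Finset.mem_product, Finset.mem_Ico] at hq
    obtain ⟨⟨⟨h11, h12⟩, h21, h22⟩, hoc, hcx, hucu⟩ := hq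
    have hc2 := Nat.odd_iff.mp hoc
    rcases Nat.even_or_odd q.2 with hue | huo
    · have hu2 := Nat.even_iff.mp hue
      rw [if_neg (not_odd_of_even hue)]
      dsimp only
      exact pair_eq (by omega) (by omega)
    · rw [if_pos huo]
      dsimp only
      exact pair_eq (by omega) (by omega)
  · -- right_inv
    intro p hp
    simp only [Finset.mem_filter, Finset.mem_product, Finset.mem_Ico] at hp
    obtain ⟨⟨⟨h11, h12⟩, h21, h22⟩, ⟨ho, he, hsum⟩, hlt⟩ := hp
    have ho2 := Nat.odd_iff.mp ho
    have he2 := Nat.even_iff.mp he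
    dsimp only
    by_cases hc : p.1 < p.2
    · rw [show min p.1 p.2 = p.1 from by omega, if_pos ho]
      exact pair_eq (by omega) (by omega)
    · rw [show min p.1 p.2 = p.2 from by omega, if_neg (not_odd_of_even he)]
      exact pair_eq (by omega) (by omega)
  · -- values
    intro q hq
    simp only [Finset.mem_filter, Finset.mem_product, Finset.mem_Ico] at hq
    obtain ⟨⟨⟨h11, h12⟩, h21, h22⟩, hoc, hcx, hucu⟩ := hq
    have hc2 := Nat.odd_iff.mp hoc
    rcases Nat.even_or_odd q.2 with hue | huo
    · have hu2 := Nat.even_iff.mp hue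
      rw [if_neg (not_odd_of_even hue)]
      dsimp only
      rw [show x - (q.1 - q.2) - q.2 = x - q.1 from by omega, tri_swap12]
    · rw [if_pos huo]
      dsimp only
      rw [show x - q.2 - (q.1 - q.2) = x - q.1 from by omega]

lemma convB (x : ℕ) (hx : Odd x) :
    (∑ c ∈ Ico 1 x, if c < x - c then E c * δE (x - c) else 0)
      = ∑ p ∈ (Ico 1 x ×ˢ Ico 1 x).filter
          (fun p => (Odd p.1 ∧ Even p.2 ∧ p.1 + p.2 < x) ∧ ¬(p.1 + p.2 < x - p.1 - p.2)),
          E p.1 * E p.2 * E (x - p.1 - p.2) := by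
  have hx2 := Nat.odd_iff.mp hx
  have step1 : (∑ c ∈ Ico 1 x, if c < x - c then E c * δE (x - c) else 0)
      = ∑ q ∈ (Ico 1 x ×ˢ Ico 1 x).filter
          (fun q => Odd (x - q.1) ∧ q.1 < x - q.1 ∧ q.2 < x - q.1 - q.2),
          E q.1 * (E q.2 * E (x - q.1 - q.2)) := by
    rw [Finset.sum_filter, Finset.sum_product]
    apply Finset.sum_congr rfl
    intro c hc
    simp only [Finset.mem_Ico] at hc
    by_cases hlt : c < x - c
    · rw [if_pos hlt, δE_extend_raw (x - c) x (by omega), Finset.mul_sum]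
      apply Finset.sum_congr rfl
      intro u hu
      rw [mul_ite, mul_zero]
      by_cases h1 : Odd (x - c) ∧ u < x - c - u
      · rw [if_pos h1, if_pos (show Odd (x - c) ∧ c < x - c ∧ u < x - c - u from
          ⟨h1.1, hlt, h1.2⟩)]
      · rw [if_neg h1, if_neg (by tauto)]
    · rw [if_neg hlt]
      refine (Finset.sum_eq_zero ?_).symm
      intro u hu
      rw [if_neg (by tauto)]
  rw [step1]
  apply Finset.sum_nbij' (fun q => if Odd q.2 then (q.2, x - q.1 - q.2) else (x - q.1 - q.2, q.2))
    (fun p => (x - p.1 - p.2, min p.1 p.2))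
  · -- hi
    intro q hq
    simp only [Finset.mem_filter, Finset.mem_product, Finset.mem_Ico] at hq
    obtain ⟨⟨⟨h11, h12⟩, h21, h22⟩, hoc, hcx, hucu⟩ := hq
    have hc2 := Nat.odd_iff.mp hoc
    rcases Nat.even_or_odd q.2 with hue | huo
    · have hu2 := Nat.even_iff.mp hue
      rw [if_neg (not_odd_of_even hue)]
      simp only [Finset.mem_filter, Finset.mem_product, Finset.mem_Ico]
      refine ⟨⟨⟨?_, ?_⟩, ?_, ?_⟩, ⟨?_, ?_, ?_⟩, ?_⟩ <;>
        first | (rw [Nat.odd_iff]; omega) | (rw [Nat.even_iff]; omega) | omega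
    · have hu2 := Nat.odd_iff.mp huo
      rw [if_pos huo]
      simp only [Finset.mem_filter, Finset.mem_product, Finset.mem_Ico]
      refine ⟨⟨⟨?_, ?_⟩, ?_, ?_⟩, ⟨?_, ?_, ?_⟩, ?_⟩ <;>
        first | (rw [Nat.odd_iff]; omega) | (rw [Nat.even_iff]; omega) | omega
  · -- hj
    intro p hp
    simp only [Finset.mem_filter, Finset.mem_product, Finset.mem_Ico] at hp
    obtain ⟨⟨⟨h11, h12⟩, h21, h22⟩, ⟨ho, he, hsum⟩, hlt⟩ := hp
    have ho2 := Nat.odd_iff.mp ho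
    have he2 := Nat.even_iff.mp he
    simp only [Finset.mem_filter, Finset.mem_product, Finset.mem_Ico]
    refine ⟨⟨⟨?_, ?_⟩, ?_, ?_⟩, ?_, ?_, ?_⟩ <;>
      first | (rw [Nat.odd_iff]; omega) | (rw [Nat.even_iff]; omega) | omega
  · -- left_inv
    intro q hq
    simp only [Finset.mem_filter, Finset.mem_product, Finset.mem_Ico] at hq
    obtain ⟨⟨⟨h11, h12⟩, h21, h22⟩, hoc, hcx, hucu⟩ := hq
    have hc2 := Nat.odd_iff.mp hoc
    rcases Nat.even_or_odd q.2 with hue | huo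
    · have hu2 := Nat.even_iff.mp hue
      rw [if_neg (not_odd_of_even hue)]
      dsimp only
      exact pair_eq (by omega) (by omega)
    · rw [if_pos huo]
      dsimp only
      exact pair_eq (by omega) (by omega)
  · -- right_inv
    intro p hp
    simp only [Finset.mem_filter, Finset.mem_product, Finset.mem_Ico] at hp
    obtain ⟨⟨⟨h11, h12⟩, h21, h22⟩, ⟨ho, he, hsum⟩, hlt⟩ := hp
    have ho2 := Nat.odd_iff.mp ho
    have he2 := Nat.even_iff.mp he
    dsimp only
    by_cases hc : p.1 < p.2
    · rw [show min p.1 p.2 = p.1 from by omega, if_pos ho]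
      exact pair_eq (by omega) (by omega)
    · rw [show min p.1 p.2 = p.2 from by omega, if_neg (not_odd_of_even he)]
      exact pair_eq (by omega) (by omega)
  · -- values
    intro q hq
    simp only [Finset.mem_filter, Finset.mem_product, Finset.mem_Ico] at hq
    obtain ⟨⟨⟨h11, h12⟩, h21, h22⟩, hoc, hcx, hucu⟩ := hq
    have hc2 := Nat.odd_iff.mp hoc
    rcases Nat.even_or_odd q.2 with hue | huo
    · have hu2 := Nat.even_iff.mp hue
      rw [if_neg (not_odd_of_even hue)]
      dsimp only
      rw [show x - (x - q.1 - q.2) - q.2 = q.1 from by omega, tri_rot, tri_swap12]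
    · rw [if_pos huo]
      dsimp only
      rw [show x - q.2 - (x - q.1 - q.2) = q.1 from by omega, tri_rot]

lemma δδE_eq_zero (x : ℕ) : δδE x = 0 := by
  rcases Nat.even_or_odd x with hx | hx
  · apply Finset.sum_eq_zero
    intro c _
    simp [K2_even hx]
  · rw [δδE]
    have h1 : ∀ c ∈ Ico 1 x,
        (if c < x - c then (x : K2) • (δE c * E (x - c) + E c * δE (x - c)) else 0)
          = (if c < x - c then δE c * E (x - c) else 0)
            + (if c < x - c then E c * δE (x - c) else 0) := by
      intro c _
      rw [K2_odd hx, one_smul]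
      split_ifs <;> simp
    rw [Finset.sum_congr rfl h1, Finset.sum_add_distrib, convA x, convB x hx,
      ← Finset.filter_filter (fun p : ℕ × ℕ => Odd p.1 ∧ Even p.2 ∧ p.1 + p.2 < x)
        (fun p => p.1 + p.2 < x - p.1 - p.2),
      ← Finset.filter_filter (fun p : ℕ × ℕ => Odd p.1 ∧ Even p.2 ∧ p.1 + p.2 < x)
        (fun p => ¬(p.1 + p.2 < x - p.1 - p.2)),
      Finset.sum_filter_add_sum_filter_not]
    exact inv2 x hx

/-- The second involution: sums of products of two coboundary pairs cancel. -/
lemma S_inv (a : ℕ) (hodd : Odd a) :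
    ∑ t ∈ (((Ico 1 (a+1)).filter (fun m => Odd m)) ×ˢ (Ico 1 (2*a+2) ×ˢ Ico 1 (2*a+2))).filter
        (fun t => Odd t.2.1 ∧ t.2.1 < t.1 ∧ Odd t.2.2 ∧ t.2.2 < 2*a+2 - t.1),
      (E t.2.1 * E (t.1 - t.2.1)) * (E t.2.2 * E (2*a+2 - t.1 - t.2.2)) = 0 := by
  have ha2 := Nat.odd_iff.mp hodd
  refine Finset.sum_involution
    (fun t _ => if t.2.1 + (2*a+2 - t.1 - t.2.2) ≤ a
      then (t.2.1 + (2*a+2 - t.1 - t.2.2), (t.2.1, t.2.2))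
      else (t.2.2 + (t.1 - t.2.1), (t.2.2, t.2.1))) ?_ ?_ ?_ ?_
  · -- f t + f (g t) = 0
    intro t ht
    simp only [Finset.mem_filter, Finset.mem_product, Finset.mem_Ico] at ht
    obtain ⟨⟨⟨⟨hm1a, hm1b⟩, hmodd⟩, ⟨ho11, ho12⟩, ho21, ho22⟩, ho1, h1m, ho2, h2m⟩ := ht
    have hmo := Nat.odd_iff.mp hmodd
    have h12 := Nat.odd_iff.mp ho1
    have h22 := Nat.odd_iff.mp ho2
    by_cases hbr : t.2.1 + (2*a+2 - t.1 - t.2.2) ≤ a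
    · rw [if_pos hbr]
      dsimp only
      rw [show t.2.1 + (2*a+2 - t.1 - t.2.2) - t.2.1 = 2*a+2 - t.1 - t.2.2 from by omega,
        show 2*a+2 - (t.2.1 + (2*a+2 - t.1 - t.2.2)) - t.2.2 = t.1 - t.2.1 from by omega,
        quad_swap24 t.2.1 (t.1 - t.2.1) t.2.2 (2*a+2 - t.1 - t.2.2)]
      exact lam_add_self _
    · rw [if_neg hbr]
      dsimp only
      rw [show t.2.2 + (t.1 - t.2.1) - t.2.2 = t.1 - t.2.1 from by omega,
        show 2*a+2 - (t.2.2 + (t.1 - t.2.1)) - t.2.1 = 2*a+2 - t.1 - t.2.2 from by omega,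
        quad_swap13 t.2.1 (t.1 - t.2.1) t.2.2 (2*a+2 - t.1 - t.2.2)]
      exact lam_add_self _
  · -- f t ≠ 0 → g t ≠ t
    intro t ht hf heq
    apply hf
    simp only [Finset.mem_filter, Finset.mem_product, Finset.mem_Ico] at ht
    obtain ⟨⟨⟨⟨hm1a, hm1b⟩, hmodd⟩, ⟨ho11, ho12⟩, ho21, ho22⟩, ho1, h1m, ho2, h2m⟩ := ht
    by_cases hbr : t.2.1 + (2*a+2 - t.1 - t.2.2) ≤ a
    · rw [if_pos hbr] at heq
      have h1 : t.2.1 + (2*a+2 - t.1 - t.2.2) = t.1 := congrArg Prod.fst heq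
      rw [show 2*a+2 - t.1 - t.2.2 = t.1 - t.2.1 from by omega]
      exact quad_24_eq_zero _ _ _
    · rw [if_neg hbr] at heq
      have h1 : (t.2.2, t.2.1) = t.2 := congrArg Prod.snd heq
      have h2 : t.2.2 = t.2.1 := congrArg Prod.fst h1
      rw [h2]
      exact quad_13_eq_zero _ _ _
  · -- g_mem
    intro t ht
    simp only [Finset.mem_filter, Finset.mem_product, Finset.mem_Ico] at ht
    obtain ⟨⟨⟨⟨hm1a, hm1b⟩, hmodd⟩, ⟨ho11, ho12⟩, ho21, ho22⟩, ho1, h1m, ho2, h2m⟩ := ht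
    have hmo := Nat.odd_iff.mp hmodd
    have h12 := Nat.odd_iff.mp ho1
    have h22 := Nat.odd_iff.mp ho2
    by_cases hbr : t.2.1 + (2*a+2 - t.1 - t.2.2) ≤ a
    · rw [if_pos hbr]
      simp only [Finset.mem_filter, Finset.mem_product, Finset.mem_Ico]
      refine ⟨⟨⟨⟨?_, ?_⟩, ?_⟩, ⟨?_, ?_⟩, ?_, ?_⟩, ?_, ?_, ?_, ?_⟩ <;>
        first | (rw [Nat.odd_iff]; omega) | (rw [Nat.even_iff]; omega) | omega
    · rw [if_neg hbr]
      simp only [Finset.mem_filter, Finset.mem_product, Finset.mem_Ico]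
      refine ⟨⟨⟨⟨?_, ?_⟩, ?_⟩, ⟨?_, ?_⟩, ?_, ?_⟩, ?_, ?_, ?_, ?_⟩ <;>
        first | (rw [Nat.odd_iff]; omega) | (rw [Nat.even_iff]; omega) | omega
  · -- involutive
    intro t ht
    simp only [Finset.mem_filter, Finset.mem_product, Finset.mem_Ico] at ht
    obtain ⟨⟨⟨⟨hm1a, hm1b⟩, hmodd⟩, ⟨ho11, ho12⟩, ho21, ho22⟩, ho1, h1m, ho2, h2m⟩ := ht
    have hmo := Nat.odd_iff.mp hmodd
    have h12 := Nat.odd_iff.mp ho1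
    have h22 := Nat.odd_iff.mp ho2
    by_cases hbr : t.2.1 + (2*a+2 - t.1 - t.2.2) ≤ a
    · rw [if_pos hbr]
      dsimp only
      rw [if_pos (show t.2.1 + (2*a+2 - (t.2.1 + (2*a+2 - t.1 - t.2.2)) - t.2.2) ≤ a from
        by omega)]
      exact pair_eq (r := t) (by omega) rfl
    · rw [if_neg hbr]
      dsimp only
      rw [if_neg (show ¬(t.2.2 + (2*a+2 - (t.2.2 + (t.1 - t.2.1)) - t.2.1) ≤ a) from by omega)]
      exact pair_eq (r := t) (by omega) rfl

lemma S_conv (a : ℕ) (ha : 3 ≤ a) (hodd : Odd a) :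
    ∑ r ∈ range ((a - 1) / 2 + 1), δE (a - 2*r) * δE (a + 2*r + 2)
      = ∑ t ∈ (((Ico 1 (a+1)).filter (fun m => Odd m)) ×ˢ (Ico 1 (2*a+2) ×ˢ Ico 1 (2*a+2))).filter
          (fun t => Odd t.2.1 ∧ t.2.1 < t.1 ∧ Odd t.2.2 ∧ t.2.2 < 2*a+2 - t.1),
        (E t.2.1 * E (t.1 - t.2.1)) * (E t.2.2 * E (2*a+2 - t.1 - t.2.2)) := by
  have ha2 := Nat.odd_iff.mp hodd
  have step1 : ∑ r ∈ range ((a - 1) / 2 + 1), δE (a - 2*r) * δE (a + 2*r + 2)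
      = ∑ m ∈ (Ico 1 (a+1)).filter (fun m => Odd m), δE m * δE (2*a+2 - m) := by
    apply Finset.sum_nbij' (fun r => a - 2*r) (fun m => (a - m)/2)
    · intro r hr
      simp only [Finset.mem_range] at hr
      simp only [Finset.mem_filter, Finset.mem_Ico]
      refine ⟨⟨by omega, by omega⟩, by rw [Nat.odd_iff]; omega⟩
    · intro m hm
      simp only [Finset.mem_filter, Finset.mem_Ico] at hm
      simp only [Finset.mem_range]
      omega
    · intro r hr
      simp only [Finset.mem_range] at hr
      omega
    · intro m hm
      simp only [Finset.mem_filter, Finset.mem_Ico] at hm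
      obtain ⟨⟨hm1, hm2⟩, hmo⟩ := hm
      have := Nat.odd_iff.mp hmo
      omega
    · intro r hr
      simp only [Finset.mem_range] at hr
      rw [show a + 2*r + 2 = 2*a+2 - (a - 2*r) from by omega]
  rw [step1]
  conv_rhs => rw [Finset.sum_filter, Finset.sum_product]
  apply Finset.sum_congr rfl
  intro m hm
  rw [Finset.sum_product]
  simp only [Finset.mem_filter, Finset.mem_Ico] at hm
  obtain ⟨⟨hm1, hm2⟩, hmo⟩ := hm
  have hmo2 := Nat.odd_iff.mp hmo
  have hn : Odd (2*a+2 - m) := by rw [Nat.odd_iff]; omega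
  rw [δE_oddIdx m (2*a+2) (by omega) hmo, δE_oddIdx (2*a+2-m) (2*a+2) (by omega) hn,
    Finset.sum_mul_sum]
  apply Finset.sum_congr rfl
  intro o1 _
  apply Finset.sum_congr rfl
  intro o2 _
  dsimp only
  by_cases h1 : Odd o1 ∧ o1 < m
  · by_cases h2 : Odd o2 ∧ o2 < 2*a+2 - m
    · rw [if_pos h1, if_pos h2, if_pos (show Odd o1 ∧ o1 < m ∧ Odd o2 ∧ o2 < 2*a+2 - m from
        ⟨h1.1, h1.2, h2.1, h2.2⟩)]
    · rw [if_neg h2, mul_zero, if_neg (by tauto)]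
  · rw [if_neg h1, zero_mul, if_neg (by tauto)]

/-- over `Z/2`, for odd `a ≥ 3`, the 3-cochain
`ε_{⟨a̲,a+2⟩} = Σ_{r=0}^{(a−1)/2} δ₁(e_{a−2r}) ∧ e_{a+2r+2}` is a cocycle:
its coboundary (computed by the Leibniz rule) vanishes. -/
theorem eps_marked_aa2_is_cocycle (a : ℕ) (ha : 3 ≤ a) (hodd : Odd a) :
    (∑ r ∈ Finset.range ((a - 1) / 2 + 1),
      (δδE (a - 2 * r) * E (a + 2 * r + 2) + δE (a - 2 * r) * δE (a + 2 * r + 2))) = 0 := by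
  have h0 : ∀ r ∈ Finset.range ((a - 1) / 2 + 1),
      (δδE (a - 2 * r) * E (a + 2 * r + 2) + δE (a - 2 * r) * δE (a + 2 * r + 2))
        = δE (a - 2 * r) * δE (a + 2 * r + 2) := by
    intro r _
    rw [δδE_eq_zero, zero_mul, zero_add]
  rw [Finset.sum_congr rfl h0, S_conv a ha hodd, S_inv a hodd]
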